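/- Let m ≥ 2, 0 ≤ s ≤ m+1, let I, J ⊆ ℝ be open intervals with x + y > 0 for all x ∈ I, y ∈ J, and let z : I → ℝ^{m+1} and w : J → ℝ^{m+1} be three times continuously differentiable curves. Define L(x,y) = (z(x)+w(y))/(x+y) − (z'(x)+w'(y))/2 and suppose that on I × J: ⟨L, L⟩_s = 1, ⟨∂L/∂x, ∂L/∂x⟩_s = 0, and ⟨∂L/∂y, ∂L/∂y⟩_s = 0. Then the conditions (c.2): 2⟨z(x)+w(y), z'''(x)⟩_s = (x+y)⟨z'(x)+w'(y), z'''(x)⟩_s, and (c.3): 2⟨z(x)+w(y), w'''(y)⟩_s = (x+y)⟨z'(x)+w'(y), w'''(y)⟩_s, hold for all (x,y) ∈ I × J; moreover ⟨∂L/∂x, ∂L/∂y⟩_s = −2/(x+y)² on I × J. -/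

import Mathlib

/-!
Write `L_x`, `L_y` for the partial derivatives of `L`. Differentiating `⟨L, L⟩ = 1` in `x` gives
`⟨L_x, L⟩ = 0`. Since `L_xx = -(2 / (x + y)) L_x - z''' / 2` and `L_xy = (2 / (x + y) ^ 2) L`,
differentiating `⟨L_x, L⟩ = 0` once more in `x`, using `⟨L_x, L_x⟩ = 0`, gives `⟨L, z'''⟩ = 0`,
which is (c.2); differentiating it in `y` gives `⟨L_x, L_y⟩ = -(2 / (x + y) ^ 2) ⟨L, L⟩`.
Condition (c.3) is (c.2) with the roles of `(x, z)` and `(y, w)` exchanged, under which `L` is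
invariant.
-/

noncomputable def pform (s n : ℕ) (u v : Fin n → ℝ) : ℝ :=
  ∑ i : Fin n, (if (i : ℕ) < s then -(u i * v i) else u i * v i)

noncomputable def pd1 {E : Type*} [NormedAddCommGroup E] [NormedSpace ℝ E]
    (L : ℝ → ℝ → E) (x y : ℝ) : E :=
  deriv (fun t => L t y) x

noncomputable def pd2 {E : Type*} [NormedAddCommGroup E] [NormedSpace ℝ E]
    (L : ℝ → ℝ → E) (x y : ℝ) : E :=
  deriv (fun t => L x t) y

open Filter Topology

section PseudoEuclidean

variable {s n : ℕ}

lemma pform_comm (u v : Fin n → ℝ) : pform s n u v = pform s n v u := by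
  unfold pform
  refine Finset.sum_congr rfl fun i _ => ?_
  split_ifs <;> ring

lemma pform_sub_left (u v w : Fin n → ℝ) :
    pform s n (u - v) w = pform s n u w - pform s n v w := by
  unfold pform
  rw [← Finset.sum_sub_distrib]
  refine Finset.sum_congr rfl fun i _ => ?_
  simp only [Pi.sub_apply]
  split_ifs <;> ring

lemma pform_smul_left (a : ℝ) (u v : Fin n → ℝ) :
    pform s n (a • u) v = a * pform s n u v := by
  unfold pform
  rw [Finset.mul_sum]
  refine Finset.sum_congr rfl fun i _ => ?_
  simp only [Pi.smul_apply, smul_eq_mul]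
  split_ifs <;> ring

lemma HasDerivAt.pform {f g : ℝ → Fin n → ℝ} {f' g' : Fin n → ℝ} {x : ℝ}
    (hf : HasDerivAt f f' x) (hg : HasDerivAt g g' x) :
    HasDerivAt (fun t => pform s n (f t) (g t)) (pform s n (f x) g' + pform s n f' (g x)) x := by
  have hfi := hasDerivAt_pi.mp hf
  have hgi := hasDerivAt_pi.mp hg
  unfold _root_.pform
  rw [← Finset.sum_add_distrib]
  refine HasDerivAt.fun_sum fun i _ => ?_
  split_ifs
  · exact ((hfi i).mul (hgi i)).neg.congr_deriv (by ring)
  · exact ((hfi i).mul (hgi i)).congr_deriv (by ring)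

lemma pform_add_pform_eq_zero_of_eventually_const {f g : ℝ → Fin n → ℝ} {f' g' : Fin n → ℝ}
    {x c : ℝ} (hf : HasDerivAt f f' x) (hg : HasDerivAt g g' x)
    (hc : ∀ᶠ t in 𝓝 x, pform s n (f t) (g t) = c) :
    pform s n (f x) g' + pform s n f' (g x) = 0 :=
  (hf.pform hg).unique ((hasDerivAt_const x c).congr_of_eventuallyEq hc)

end PseudoEuclidean

lemma ContDiffOn.differentiableAt_deriv {E : Type*} [NormedAddCommGroup E] [NormedSpace ℝ E]
    {f : ℝ → E} {I : Set ℝ} {x : ℝ} (hI : IsOpen I) (hf : ContDiffOn ℝ 2 f I) (hx : x ∈ I) :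
    DifferentiableAt ℝ (deriv f) x :=
  ((hf.deriv_of_isOpen hI (m := 1) (by norm_num)).contDiffAt (hI.mem_nhds hx)).differentiableAt
    (by norm_num)

section Surface

variable {E : Type*} [NormedAddCommGroup E] [NormedSpace ℝ E]

noncomputable def surf (z w : ℝ → E) (x y : ℝ) : E :=
  (1 / (x + y)) • (z x + w y) - (1 / 2 : ℝ) • (deriv z x + deriv w y)

noncomputable def surfDx (z w : ℝ → E) (x y : ℝ) : E :=
  (1 / (x + y)) • deriv z x - (1 / (x + y) ^ 2) • (z x + w y) - (1 / 2 : ℝ) • deriv (deriv z) x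

lemma surf_swap (z w : ℝ → E) (x y : ℝ) : surf w z y x = surf z w x y := by
  simp only [surf, add_comm]

variable {z w : ℝ → E} {x y : ℝ}

lemma hasDerivAt_surf_fst (hz : DifferentiableAt ℝ z x) (hz' : DifferentiableAt ℝ (deriv z) x)
    (hxy : x + y ≠ 0) : HasDerivAt (fun t => surf z w t y) (surfDx z w x y) x := by
  have hc : HasDerivAt (fun t => 1 / (t + y)) (-(1 / (x + y) ^ 2)) x :=
    ((hasDerivAt_const x 1).div ((hasDerivAt_id' x).add_const y) hxy).congr_deriv
      (by field_simp; ring)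
  exact ((hc.smul (hz.hasDerivAt.add_const (w y))).sub
    ((hz'.hasDerivAt.add_const (deriv w y)).const_smul (1 / 2 : ℝ))).congr_deriv
    (by simp only [surfDx]; module)

lemma hasDerivAt_surfDx_fst (hz : DifferentiableAt ℝ z x) (hz' : DifferentiableAt ℝ (deriv z) x)
    (hz'' : DifferentiableAt ℝ (deriv (deriv z)) x) (hxy : x + y ≠ 0) :
    HasDerivAt (fun t => surfDx z w t y)
      ((-(2 / (x + y))) • surfDx z w x y - (1 / 2 : ℝ) • deriv (deriv (deriv z)) x) x := by
  have hc : HasDerivAt (fun t => 1 / (t + y)) (-(1 / (x + y) ^ 2)) x :=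
    ((hasDerivAt_const x 1).div ((hasDerivAt_id' x).add_const y) hxy).congr_deriv
      (by field_simp; ring)
  have hc2 : HasDerivAt (fun t => 1 / (t + y) ^ 2) (-(2 / (x + y) ^ 3)) x :=
    ((hasDerivAt_const x 1).div (((hasDerivAt_id' x).add_const y).fun_pow 2)
      (pow_ne_zero 2 hxy)).congr_deriv (by field_simp; ring)
  exact (((hc.smul hz'.hasDerivAt).sub (hc2.smul (hz.hasDerivAt.add_const (w y)))).sub
    (hz''.hasDerivAt.const_smul (1 / 2 : ℝ))).congr_deriv
    (by simp only [surfDx]; match_scalars <;> field_simp; ring)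

lemma hasDerivAt_surfDx_snd (hw : DifferentiableAt ℝ w y) (hxy : x + y ≠ 0) :
    HasDerivAt (fun t => surfDx z w x t) ((2 / (x + y) ^ 2) • surf z w x y) y := by
  have hc : HasDerivAt (fun t => 1 / (x + t)) (-(1 / (x + y) ^ 2)) y :=
    ((hasDerivAt_const y 1).div ((hasDerivAt_id' y).const_add x) hxy).congr_deriv
      (by field_simp; ring)
  have hc2 : HasDerivAt (fun t => 1 / (x + t) ^ 2) (-(2 / (x + y) ^ 3)) y :=
    ((hasDerivAt_const y 1).div (((hasDerivAt_id' y).const_add x).fun_pow 2)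
      (pow_ne_zero 2 hxy)).congr_deriv (by field_simp; ring)
  exact (((hc.smul (hasDerivAt_const y (deriv z x))).sub
    (hc2.smul (hw.hasDerivAt.const_add (z x)))).sub (hasDerivAt_const y _)).congr_deriv
    (by simp only [surf]; match_scalars <;> field_simp)

lemma hasDerivAt_surf_snd (hw : DifferentiableAt ℝ w y) (hw' : DifferentiableAt ℝ (deriv w) y)
    (hxy : x + y ≠ 0) : HasDerivAt (fun t => surf z w x t) (surfDx w z y x) y := by
  simpa only [surf_swap] using hasDerivAt_surf_fst (w := z) hw hw' (by rwa [add_comm])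

variable {I J : Set ℝ}

lemma hasDerivAt_surf_fst_of_contDiffOn (hI : IsOpen I) (hz : ContDiffOn ℝ 2 z I) (hx : x ∈ I)
    (hxy : x + y ≠ 0) : HasDerivAt (fun t => surf z w t y) (surfDx z w x y) x :=
  hasDerivAt_surf_fst ((hz.contDiffAt (hI.mem_nhds hx)).differentiableAt (by norm_num))
    (hz.differentiableAt_deriv hI hx) hxy

lemma hasDerivAt_surf_snd_of_contDiffOn (hJ : IsOpen J) (hw : ContDiffOn ℝ 2 w J) (hy : y ∈ J)
    (hxy : x + y ≠ 0) : HasDerivAt (fun t => surf z w x t) (surfDx w z y x) y :=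
  hasDerivAt_surf_snd ((hw.contDiffAt (hJ.mem_nhds hy)).differentiableAt (by norm_num))
    (hw.differentiableAt_deriv hJ hy) hxy

end Surface

section OnRectangle

variable {s n : ℕ} {I J : Set ℝ} {z w : ℝ → Fin n → ℝ} {x y : ℝ}

lemma pform_surfDx_surf_eq_zero (hI : IsOpen I) (hz : ContDiffOn ℝ 2 z I)
    (hne : ∀ x ∈ I, ∀ y ∈ J, x + y ≠ 0)
    (hLL : ∀ x ∈ I, ∀ y ∈ J, pform s n (surf z w x y) (surf z w x y) = 1)
    (hx : x ∈ I) (hy : y ∈ J) : pform s n (surfDx z w x y) (surf z w x y) = 0 := by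
  have hL := hasDerivAt_surf_fst_of_contDiffOn (w := w) hI hz hx (hne x hx y hy)
  have h := pform_add_pform_eq_zero_of_eventually_const hL hL
    (eventually_of_mem (hI.mem_nhds hx) fun t ht => hLL t ht y hy)
  rw [pform_comm (surf z w x y)] at h
  linarith

lemma pform_surf_deriv_deriv_deriv_eq_zero (hI : IsOpen I) (hz : ContDiffOn ℝ 3 z I)
    (hne : ∀ x ∈ I, ∀ y ∈ J, x + y ≠ 0)
    (hLL : ∀ x ∈ I, ∀ y ∈ J, pform s n (surf z w x y) (surf z w x y) = 1)
    (hxx : ∀ x ∈ I, ∀ y ∈ J, pform s n (surfDx z w x y) (surfDx z w x y) = 0)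
    (hx : x ∈ I) (hy : y ∈ J) : pform s n (surf z w x y) (deriv (deriv (deriv z)) x) = 0 := by
  have hz2 : ContDiffOn ℝ 2 z I := hz.of_le (by norm_num)
  have hdz := (hz.contDiffAt (hI.mem_nhds hx)).differentiableAt (by norm_num)
  have hdz' := hz2.differentiableAt_deriv hI hx
  have hdz'' := (hz.deriv_of_isOpen hI (m := 2) (by norm_num)).differentiableAt_deriv hI hx
  have h := pform_add_pform_eq_zero_of_eventually_const
    (hasDerivAt_surfDx_fst hdz hdz' hdz'' (hne x hx y hy))
    (hasDerivAt_surf_fst hdz hdz' (hne x hx y hy))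
    (eventually_of_mem (hI.mem_nhds hx) fun t ht => pform_surfDx_surf_eq_zero hI hz2 hne hLL ht hy)
  rw [hxx x hx y hy, pform_sub_left, pform_smul_left, pform_smul_left,
    pform_surfDx_surf_eq_zero hI hz2 hne hLL hx hy, pform_comm] at h
  linarith

lemma pform_surfDx_surfDx_swap (hI : IsOpen I) (hJ : IsOpen J) (hz : ContDiffOn ℝ 2 z I)
    (hw : ContDiffOn ℝ 2 w J) (hne : ∀ x ∈ I, ∀ y ∈ J, x + y ≠ 0)
    (hLL : ∀ x ∈ I, ∀ y ∈ J, pform s n (surf z w x y) (surf z w x y) = 1)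
    (hx : x ∈ I) (hy : y ∈ J) :
    pform s n (surfDx z w x y) (surfDx w z y x) = -2 / (x + y) ^ 2 := by
  have hdw := (hw.contDiffAt (hJ.mem_nhds hy)).differentiableAt (by norm_num)
  have h := pform_add_pform_eq_zero_of_eventually_const
    (hasDerivAt_surfDx_snd (z := z) hdw (hne x hx y hy))
    (hasDerivAt_surf_snd_of_contDiffOn hJ hw hy (hne x hx y hy))
    (eventually_of_mem (hJ.mem_nhds hy) fun t ht => pform_surfDx_surf_eq_zero hI hz hne hLL hx ht)
  rw [pform_smul_left, hLL x hx y hy] at h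
  linear_combination h

lemma two_mul_pform_eq_of_pform_surf_eq_zero {v : Fin n → ℝ}
    (hxy : x + y ≠ 0) (h : pform s n (surf z w x y) v = 0) :
    2 * pform s n (z x + w y) v = (x + y) * pform s n (deriv z x + deriv w y) v := by
  rw [surf, pform_sub_left, pform_smul_left, pform_smul_left] at h
  field_simp at h
  linarith

end OnRectangle

theorem stmt_10_general (m s : ℕ) (I J : Set ℝ)
    (hIo : IsOpen I) (hJo : IsOpen J)
    (hpos : ∀ x ∈ I, ∀ y ∈ J, 0 < x + y)
    (z w : ℝ → Fin (m + 1) → ℝ) (hz : ContDiffOn ℝ 3 z I) (hw : ContDiffOn ℝ 3 w J)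
    (L : ℝ → ℝ → Fin (m + 1) → ℝ)
    (hLdef : ∀ x y : ℝ,
      L x y = (1 / (x + y)) • (z x + w y) - (1 / 2 : ℝ) • (deriv z x + deriv w y))
    (hLL : ∀ x ∈ I, ∀ y ∈ J, pform s (m + 1) (L x y) (L x y) = 1)
    (hxx : ∀ x ∈ I, ∀ y ∈ J, pform s (m + 1) (pd1 L x y) (pd1 L x y) = 0)
    (hyy : ∀ x ∈ I, ∀ y ∈ J, pform s (m + 1) (pd2 L x y) (pd2 L x y) = 0) :
    (∀ x ∈ I, ∀ y ∈ J,
      2 * pform s (m + 1) (z x + w y) (deriv (deriv (deriv z)) x) =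
        (x + y) * pform s (m + 1) (deriv z x + deriv w y) (deriv (deriv (deriv z)) x)) ∧
    (∀ x ∈ I, ∀ y ∈ J,
      2 * pform s (m + 1) (z x + w y) (deriv (deriv (deriv w)) y) =
        (x + y) * pform s (m + 1) (deriv z x + deriv w y) (deriv (deriv (deriv w)) y)) ∧
    (∀ x ∈ I, ∀ y ∈ J, pform s (m + 1) (pd1 L x y) (pd2 L x y) = -2 / (x + y) ^ 2) := by
  obtain rfl : L = surf z w := funext fun x => funext (hLdef x)
  have hne : ∀ x ∈ I, ∀ y ∈ J, x + y ≠ 0 := fun x hx y hy => (hpos x hx y hy).ne'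
  have hne' : ∀ y ∈ J, ∀ x ∈ I, y + x ≠ 0 := fun y hy x hx => add_comm x y ▸ hne x hx y hy
  have hz2 : ContDiffOn ℝ 2 z I := hz.of_le (by norm_num)
  have hw2 : ContDiffOn ℝ 2 w J := hw.of_le (by norm_num)
  have hpd1 : ∀ x ∈ I, ∀ y ∈ J, pd1 (surf z w) x y = surfDx z w x y := fun x hx y hy =>
    (hasDerivAt_surf_fst_of_contDiffOn hIo hz2 hx (hne x hx y hy)).deriv
  have hpd2 : ∀ x ∈ I, ∀ y ∈ J, pd2 (surf z w) x y = surfDx w z y x := fun x hx y hy =>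
    (hasDerivAt_surf_snd_of_contDiffOn hJo hw2 hy (hne x hx y hy)).deriv
  have hLL' : ∀ y ∈ J, ∀ x ∈ I, pform s (m + 1) (surf w z y x) (surf w z y x) = 1 :=
    fun y hy x hx => by rw [surf_swap]; exact hLL x hx y hy
  have hxx' : ∀ x ∈ I, ∀ y ∈ J, pform s (m + 1) (surfDx z w x y) (surfDx z w x y) = 0 :=
    fun x hx y hy => hpd1 x hx y hy ▸ hxx x hx y hy
  have hyy' : ∀ y ∈ J, ∀ x ∈ I, pform s (m + 1) (surfDx w z y x) (surfDx w z y x) = 0 :=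
    fun y hy x hx => hpd2 x hx y hy ▸ hyy x hx y hy
  refine ⟨fun x hx y hy => ?_, fun x hx y hy => ?_, fun x hx y hy => ?_⟩
  · exact two_mul_pform_eq_of_pform_surf_eq_zero (hne x hx y hy)
      (pform_surf_deriv_deriv_deriv_eq_zero hIo hz hne hLL hxx' hx hy)
  · simpa only [add_comm] using two_mul_pform_eq_of_pform_surf_eq_zero (hne' y hy x hx)
      (pform_surf_deriv_deriv_deriv_eq_zero hJo hw hne' hLL' hyy' hy hx)
  · rw [hpd1 x hx y hy, hpd2 x hx y hy]
    exact pform_surfDx_surfDx_swap hIo hJo hz2 hw2 hne hLL hx hy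

theorem stmt_10 (m s : ℕ) (hm : 2 ≤ m) (hs : s ≤ m + 1) (I J : Set ℝ)
    (hIo : IsOpen I) (hIc : I.OrdConnected) (hJo : IsOpen J) (hJc : J.OrdConnected)
    (hpos : ∀ x ∈ I, ∀ y ∈ J, 0 < x + y)
    (z w : ℝ → Fin (m + 1) → ℝ) (hz : ContDiffOn ℝ 3 z I) (hw : ContDiffOn ℝ 3 w J)
    (L : ℝ → ℝ → Fin (m + 1) → ℝ)
    (hLdef : ∀ x y : ℝ,
      L x y = (1 / (x + y)) • (z x + w y) - (1 / 2 : ℝ) • (deriv z x + deriv w y))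
    (hLL : ∀ x ∈ I, ∀ y ∈ J, pform s (m + 1) (L x y) (L x y) = 1)
    (hxx : ∀ x ∈ I, ∀ y ∈ J, pform s (m + 1) (pd1 L x y) (pd1 L x y) = 0)
    (hyy : ∀ x ∈ I, ∀ y ∈ J, pform s (m + 1) (pd2 L x y) (pd2 L x y) = 0) :
    (∀ x ∈ I, ∀ y ∈ J,
      2 * pform s (m + 1) (z x + w y) (deriv (deriv (deriv z)) x) =
        (x + y) * pform s (m + 1) (deriv z x + deriv w y) (deriv (deriv (deriv z)) x)) ∧
    (∀ x ∈ I, ∀ y ∈ J,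
      2 * pform s (m + 1) (z x + w y) (deriv (deriv (deriv w)) y) =
        (x + y) * pform s (m + 1) (deriv z x + deriv w y) (deriv (deriv (deriv w)) y)) ∧
    (∀ x ∈ I, ∀ y ∈ J, pform s (m + 1) (pd1 L x y) (pd2 L x y) = -2 / (x + y) ^ 2) :=
  stmt_10_general m s I J hIo hJo hpos z w hz hw L hLdef hLL hxx hyy
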